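/- Let K be a compact Hausdorff space and X a uniformly convex real Banach space with modulus of convexity δ_X. Let T : C(K) → X be a bounded linear operator with ‖T‖ = 1 that is represented by a countably additive, regular X-valued Borel vector measure G on K, i.e. x*(Tf) = ∫_K f d(x*G) for every f ∈ C(K) and every x* ∈ X*. Let 0 < ε < 1, let A ⊆ K be a Borel set, and let S : C(K) → X be the bounded linear operator satisfying x*(Sf) = ∫_A f d(x*G) for every f ∈ C(K) and x* ∈ X*. If ‖S‖ > 1 − δ_X(ε), then ‖T − S‖ < ε; equivalently, sup over f in the closed unit ball of C(K) of ‖∫_{K∖A} f dG‖ is less than ε. -/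

import Mathlib

open MeasureTheory

/-- The finite signed measure `E ↦ x*(G(E))` obtained from an `X`-valued vector measure `G`
and a continuous linear functional `x*`. -/
noncomputable def dualMeasure {K : Type*} [MeasurableSpace K] {X : Type*}
    [NormedAddCommGroup X] [NormedSpace ℝ X]
    (G : VectorMeasure K X) (xs : StrongDual ℝ X) : SignedMeasure K :=
  G.mapRange xs.toLinearMap.toAddMonoidHom xs.continuous

/-- The integral of a function against a signed measure, via the Jordan decomposition. -/
noncomputable def sintegral {K : Type*} [MeasurableSpace K]
    (s : SignedMeasure K) (f : K → ℝ) : ℝ :=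
  (∫ t, f t ∂s.toJordanDecomposition.posPart) - ∫ t, f t ∂s.toJordanDecomposition.negPart

/-- The semivariation `‖G‖(A) = sup {|x*G|(A) : ‖x*‖ ≤ 1}` of a vector measure. -/
noncomputable def semivariation {K : Type*} [MeasurableSpace K] {X : Type*}
    [NormedAddCommGroup X] [NormedSpace ℝ X]
    (G : VectorMeasure K X) (A : Set K) : ENNReal :=
  ⨆ xs ∈ Metric.closedBall (0 : StrongDual ℝ X) 1,
    (dualMeasure G xs).totalVariation A

/-- Regularity of a vector measure: every Borel set can be approximated from inside by
compact sets and from outside by open sets in semivariation. -/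
def IsRegularVM {K : Type*} [TopologicalSpace K] [MeasurableSpace K] {X : Type*}
    [NormedAddCommGroup X] [NormedSpace ℝ X] (G : VectorMeasure K X) : Prop :=
  ∀ E : Set K, MeasurableSet E → ∀ ε : ℝ, 0 < ε →
    ∃ F O : Set K, IsCompact F ∧ IsOpen O ∧ F ⊆ E ∧ E ⊆ O ∧
      semivariation G (O \ F) < ENNReal.ofReal ε

/-- The modulus of convexity of a real normed space `X`:
`δ_X(ε) = inf {1 - ‖(x+y)/2‖ : ‖x‖ ≤ 1, ‖y‖ ≤ 1, ‖x - y‖ ≥ ε}`. -/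
noncomputable def modulusOfConvexity (X : Type*) [NormedAddCommGroup X] (ε : ℝ) : ℝ :=
  sInf {d : ℝ | ∃ x y : X, ‖x‖ ≤ 1 ∧ ‖y‖ ≤ 1 ∧ ε ≤ ‖x - y‖ ∧ d = 1 - ‖x + y‖ / 2}

/-!
Suppose `‖T - S‖ ≥ ε`. Regularity of `G` and Urysohn's lemma give a cut-off `0 ≤ φ ≤ 1` that is
close to the indicator of `A` in semivariation, so that `T (φ g) ≈ S g` uniformly on bounded `g`.
For `f, w` in the unit ball, `h = φ f + (1 - φ) w` is again in the unit ball and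
`T h ≈ S f + (T - S) w`; hence `S f ± (T - S) w` lie almost in the unit ball. Choosing `w` with
`‖(T - S) w‖` nearly `‖T - S‖ ≥ ε`, their difference has norm almost `2ε` or more, so the modulus
of convexity bounds their midpoint: `‖S f‖ ≤ (1 - δ_X(ε))(1 + o(1))`, contradicting
`‖S‖ > 1 - δ_X(ε)`.
-/

open Set Topology

namespace MeasureTheory.SignedMeasure

theorem toJordanDecomposition_restrict {K : Type*} [MeasurableSpace K]
    (s : SignedMeasure K) {A : Set K} (hA : MeasurableSet A) :
    toJordanDecomposition (s.restrict A) =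
      ⟨s.toJordanDecomposition.posPart.restrict A, s.toJordanDecomposition.negPart.restrict A,
        s.toJordanDecomposition.mutuallySingular.mono Measure.restrict_le_self
          Measure.restrict_le_self⟩ := by
  apply toJordanDecomposition_eq
  ext B hB
  rw [VectorMeasure.restrict_apply _ hA hB]
  conv_lhs => rw [← s.toSignedMeasure_toJordanDecomposition]
  simp only [JordanDecomposition.toSignedMeasure, sub_apply,
    Measure.toSignedMeasure_apply_measurable (hB.inter hA),
    Measure.toSignedMeasure_apply_measurable hB, measureReal_restrict_apply hB]

end MeasureTheory.SignedMeasure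

theorem sintegral_restrict {K : Type*} [MeasurableSpace K] (s : SignedMeasure K) {A : Set K}
    (hA : MeasurableSet A) (g : K → ℝ) :
    sintegral (s.restrict A) g =
      (∫ t in A, g t ∂s.toJordanDecomposition.posPart) -
        ∫ t in A, g t ∂s.toJordanDecomposition.negPart := by
  rw [sintegral, SignedMeasure.toJordanDecomposition_restrict s hA]

section CutOff

variable {K : Type*} [TopologicalSpace K] [CompactSpace K] [MeasurableSpace K]
  [OpensMeasurableSpace K] {φ : C(K, ℝ)} {A B : Set K}

theorem abs_integral_mul_sub_setIntegral_le (ν : Measure K) [IsFiniteMeasure ν]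
    (hA : MeasurableSet A) (hB : MeasurableSet B)
    (hφ : ∀ t, |φ t - A.indicator 1 t| ≤ B.indicator 1 t) (g : C(K, ℝ)) :
    |(∫ t, φ t * g t ∂ν) - ∫ t in A, g t ∂ν| ≤ ‖g‖ * ν.real B := by
  have hint : ∀ f : C(K, ℝ), Integrable f ν := fun f =>
    f.continuous.integrable_of_hasCompactSupport (.of_compactSpace _)
  have hdiff : (∫ t, φ t * g t ∂ν) - ∫ t in A, g t ∂ν
      = ∫ t, (φ t - A.indicator 1 t) * g t ∂ν := by
    rw [← integral_indicator hA,
      ← integral_sub (f := fun t => φ t * g t) (hint (φ * g)) ((hint g).indicator hA)]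
    congr 1 with t
    by_cases ht : t ∈ A <;> simp [ht, sub_mul]
  have hbound : ∀ t, ‖(φ t - A.indicator 1 t) * g t‖ ≤ B.indicator (fun _ => ‖g‖) t :=
    fun t => calc
      ‖(φ t - A.indicator 1 t) * g t‖ ≤ B.indicator 1 t * ‖g‖ := by
        rw [norm_mul, Real.norm_eq_abs]
        exact mul_le_mul (hφ t) (g.norm_coe_le_norm t) (norm_nonneg _)
          ((abs_nonneg _).trans (hφ t))
      _ = B.indicator (fun _ => ‖g‖) t := by by_cases ht : t ∈ B <;> simp [ht]
  calc |(∫ t, φ t * g t ∂ν) - ∫ t in A, g t ∂ν|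
      ≤ ∫ t, B.indicator (fun _ => ‖g‖) t ∂ν := by
        rw [hdiff, ← Real.norm_eq_abs]
        exact norm_integral_le_of_norm_le ((integrable_const _).indicator hB)
          (.of_forall hbound)
    _ = ‖g‖ * ν.real B := by rw [integral_indicator_const _ hB, smul_eq_mul, mul_comm]

theorem abs_sintegral_mul_sub_sintegral_restrict_le (s : SignedMeasure K)
    (hA : MeasurableSet A) (hB : MeasurableSet B)
    (hφ : ∀ t, |φ t - A.indicator 1 t| ≤ B.indicator 1 t) (g : C(K, ℝ)) :
    |sintegral s (fun t => φ t * g t) - sintegral (s.restrict A) g|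
      ≤ ‖g‖ * (s.totalVariation B).toReal := by
  rw [sintegral_restrict s hA, sintegral]
  set μ := s.toJordanDecomposition.posPart
  set ν := s.toJordanDecomposition.negPart
  have hμ := abs_integral_mul_sub_setIntegral_le μ hA hB hφ g
  have hν := abs_integral_mul_sub_setIntegral_le ν hA hB hφ g
  have htv : (s.totalVariation B).toReal = μ.real B + ν.real B := by
    simp only [SignedMeasure.totalVariation, Measure.add_apply, measureReal_def, μ, ν]
    exact ENNReal.toReal_add (measure_ne_top _ _) (measure_ne_top _ _)
  rw [htv, mul_add]
  calc _ = |((∫ t, φ t * g t ∂μ) - ∫ t in A, g t ∂μ)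
          - ((∫ t, φ t * g t ∂ν) - ∫ t in A, g t ∂ν)| := by ring_nf
    _ ≤ _ := (abs_sub _ _).trans (add_le_add hμ hν)

end CutOff

theorem dualMeasure_totalVariation_le_semivariation {K : Type*} [MeasurableSpace K] {X : Type*}
    [NormedAddCommGroup X] [NormedSpace ℝ X] (G : VectorMeasure K X) {xs : StrongDual ℝ X}
    (hxs : ‖xs‖ ≤ 1) (B : Set K) :
    (dualMeasure G xs).totalVariation B ≤ semivariation G B :=
  le_biSup (fun xs => (dualMeasure G xs).totalVariation B) (mem_closedBall_zero_iff.2 hxs)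

theorem abs_sub_indicator_one_le_indicator_diff {K : Type*} {φ : K → ℝ} {A F O : Set K}
    (hφ : ∀ t, φ t ∈ Icc 0 1) (hφF : EqOn φ 1 F) (hφO : EqOn φ 0 Oᶜ) (hFA : F ⊆ A)
    (hAO : A ⊆ O) (t : K) :
    |φ t - A.indicator 1 t| ≤ (O \ F).indicator 1 t := by
  obtain ⟨h0, h1⟩ := hφ t
  by_cases htF : t ∈ F
  · simp [hφF htF, hFA htF, htF]
  by_cases htO : t ∈ O
  · by_cases htA : t ∈ A <;> simp [htA, htO, htF, abs_le] <;> constructor <;> linarith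
  · simp [hφO htO, htO, show t ∉ A from fun h => htO (hAO h)]

section Operator

variable {K : Type*} [TopologicalSpace K] [CompactSpace K] [MeasurableSpace K]
  [OpensMeasurableSpace K] {X : Type*} [NormedAddCommGroup X] [NormedSpace ℝ X]
  {T S : C(K, ℝ) →L[ℝ] X} {G : VectorMeasure K X}

theorem norm_apply_mul_sub_apply_le
    (hrep : ∀ (f : C(K, ℝ)) (xs : StrongDual ℝ X),
      xs (T f) = sintegral (dualMeasure G xs) (fun t => f t))
    {A B : Set K} (hA : MeasurableSet A) (hB : MeasurableSet B)
    (hS : ∀ (f : C(K, ℝ)) (xs : StrongDual ℝ X),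
      xs (S f) = sintegral ((dualMeasure G xs).restrict A) (fun t => f t))
    {η : ℝ} (hη : 0 ≤ η) (hGB : semivariation G B ≤ ENNReal.ofReal η)
    {φ : C(K, ℝ)} (hφ : ∀ t, |φ t - A.indicator 1 t| ≤ B.indicator 1 t) (g : C(K, ℝ)) :
    ‖T (φ * g) - S g‖ ≤ ‖g‖ * η := by
  obtain ⟨xs, hxs, hnorm⟩ := exists_dual_vector'' ℝ (T (φ * g) - S g)
  have hvar : ((dualMeasure G xs).totalVariation B).toReal ≤ η :=
    ENNReal.toReal_le_of_le_ofReal hη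
      ((dualMeasure_totalVariation_le_semivariation G hxs B).trans hGB)
  calc ‖T (φ * g) - S g‖ = xs (T (φ * g)) - xs (S g) := by rw [← map_sub, hnorm]; rfl
    _ ≤ |sintegral (dualMeasure G xs) (fun t => φ t * g t)
          - sintegral ((dualMeasure G xs).restrict A) g| := by
        rw [hrep, hS]; exact le_abs_self _
    _ ≤ ‖g‖ * ((dualMeasure G xs).totalVariation B).toReal :=
        abs_sintegral_mul_sub_sintegral_restrict_le _ hA hB hφ g
    _ ≤ ‖g‖ * η := mul_le_mul_of_nonneg_left hvar (norm_nonneg g)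

theorem exists_norm_apply_mul_sub_apply_le [T2Space K] (hreg : IsRegularVM G)
    (hrep : ∀ (f : C(K, ℝ)) (xs : StrongDual ℝ X),
      xs (T f) = sintegral (dualMeasure G xs) (fun t => f t))
    {A : Set K} (hA : MeasurableSet A)
    (hS : ∀ (f : C(K, ℝ)) (xs : StrongDual ℝ X),
      xs (S f) = sintegral ((dualMeasure G xs).restrict A) (fun t => f t))
    {η : ℝ} (hη : 0 < η) :
    ∃ φ : C(K, ℝ), (∀ t, φ t ∈ Icc 0 1) ∧ ∀ g, ‖T (φ * g) - S g‖ ≤ ‖g‖ * η := by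
  obtain ⟨F, O, hF, hO, hFA, hAO, hGOF⟩ := hreg A hA η hη
  obtain ⟨φ, hφO, hφF, hφ⟩ := exists_continuous_zero_one_of_isClosed hO.isClosed_compl
    hF.isClosed (disjoint_compl_left_iff_subset.2 (hFA.trans hAO))
  exact ⟨φ, hφ, norm_apply_mul_sub_apply_le hrep hA (hO.measurableSet.diff hF.measurableSet) hS
    hη.le hGOF.le (abs_sub_indicator_one_le_indicator_diff hφ hφF hφO hFA hAO)⟩

end Operator

theorem ContinuousMap.norm_mul_add_one_sub_mul_le_one {K : Type*} [TopologicalSpace K]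
    [CompactSpace K] {φ f g : C(K, ℝ)} (hφ : ∀ t, φ t ∈ Icc 0 1) (hf : ‖f‖ ≤ 1)
    (hg : ‖g‖ ≤ 1) : ‖φ * f + (1 - φ) * g‖ ≤ 1 := by
  refine (ContinuousMap.norm_le _ zero_le_one).2 fun t => ?_
  obtain ⟨h0, h1⟩ := hφ t
  calc ‖φ t * f t + (1 - φ t) * g t‖ ≤ φ t * ‖f t‖ + (1 - φ t) * ‖g t‖ := by
        refine (norm_add_le _ _).trans_eq ?_
        rw [norm_mul, norm_mul, Real.norm_of_nonneg h0, Real.norm_of_nonneg (sub_nonneg.2 h1)]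
    _ ≤ φ t * 1 + (1 - φ t) * 1 := by
        gcongr
        · exact (f.norm_coe_le_norm t).trans hf
        · exact (g.norm_coe_le_norm t).trans hg
    _ = 1 := by ring

theorem norm_apply_add_sub_apply_le {K : Type*} [TopologicalSpace K] [CompactSpace K] {X : Type*}
    [NormedAddCommGroup X] [NormedSpace ℝ X] {T S : C(K, ℝ) →L[ℝ] X} (hT : ‖T‖ ≤ 1)
    {φ : C(K, ℝ)} (hφ : ∀ t, φ t ∈ Icc 0 1) {η : ℝ} (hη : 0 ≤ η)
    (hTS : ∀ g, ‖T (φ * g) - S g‖ ≤ ‖g‖ * η) {f w : C(K, ℝ)} (hf : ‖f‖ ≤ 1) (hw : ‖w‖ ≤ 1) :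
    ‖S f + (T - S) w‖ ≤ 1 + 2 * η := by
  set h := φ * f + (1 - φ) * w
  have hTh : ‖T h‖ ≤ 1 :=
    (T.le_of_opNorm_le hT h).trans
      (by simpa using ContinuousMap.norm_mul_add_one_sub_mul_le_one hφ hf hw)
  have hfw : ‖f - w‖ ≤ 2 := (norm_sub_le f w).trans (by linarith)
  have hsplit : S f + (T - S) w = T h - (T (φ * (f - w)) - S (f - w)) := by
    rw [show h = φ * (f - w) + w by ring, map_add, map_sub, sub_apply]
    abel
  calc ‖S f + (T - S) w‖ ≤ ‖T h‖ + ‖T (φ * (f - w)) - S (f - w)‖ := by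
        rw [hsplit]; exact norm_sub_le _ _
    _ ≤ 1 + 2 * η := add_le_add hTh ((hTS _).trans (by nlinarith))

theorem modulusOfConvexity_le {X : Type*} [NormedAddCommGroup X] {ε : ℝ} {x y : X}
    (hx : ‖x‖ ≤ 1) (hy : ‖y‖ ≤ 1) (hxy : ε ≤ ‖x - y‖) :
    modulusOfConvexity X ε ≤ 1 - ‖x + y‖ / 2 := by
  refine csInf_le ⟨0, ?_⟩ ⟨x, y, hx, hy, hxy, rfl⟩
  rintro d ⟨x', y', hx', hy', -, rfl⟩
  linarith [norm_add_le x' y']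

theorem norm_le_of_norm_add_le_of_norm_sub_le {X : Type*} [NormedAddCommGroup X]
    [NormedSpace ℝ X] {ε : ℝ} {a b : X} {β : ℝ} (hβ : 0 < β)
    (hadd : ‖a + b‖ ≤ β) (hsub : ‖a - b‖ ≤ β) (hb : ε * β ≤ 2 * ‖b‖) :
    ‖a‖ ≤ (1 - modulusOfConvexity X ε) * β := by
  have hscale : ∀ v : X, ‖β⁻¹ • v‖ = ‖v‖ / β := fun v => by
    rw [norm_smul, Real.norm_of_nonneg (inv_nonneg.2 hβ.le), inv_mul_eq_div]
  have hδ := modulusOfConvexity_le (ε := ε) (x := β⁻¹ • (a + b)) (y := β⁻¹ • (a - b))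
    (by rw [hscale, div_le_one hβ]; exact hadd) (by rw [hscale, div_le_one hβ]; exact hsub)
    (by rw [← smul_sub, add_sub_sub_cancel, ← two_smul ℝ, hscale, norm_smul, le_div_iff₀ hβ]
        simpa using hb)
  rw [← smul_add, add_add_sub_cancel, ← two_smul ℝ, hscale, norm_smul] at hδ
  have : ‖a‖ / β ≤ 1 - modulusOfConvexity X ε := by
    rw [Real.norm_two, mul_div_assoc, mul_div_cancel_left₀ _ two_ne_zero] at hδ
    linarith
  rwa [div_le_iff₀ hβ] at this

theorem norm_sub_lt_of_restricted_norm_gt_general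
    {K : Type*} [TopologicalSpace K] [CompactSpace K] [T2Space K]
    [MeasurableSpace K] [BorelSpace K]
    {X : Type*} [NormedAddCommGroup X] [NormedSpace ℝ X]
    (T : C(K, ℝ) →L[ℝ] X) (hT : ‖T‖ = 1)
    (G : VectorMeasure K X) (hreg : IsRegularVM G)
    (hrep : ∀ (f : C(K, ℝ)) (xs : StrongDual ℝ X),
      xs (T f) = sintegral (dualMeasure G xs) (fun t => f t))
    {ε : ℝ} (hε0 : 0 < ε)
    (A : Set K) (hA : MeasurableSet A)
    (S : C(K, ℝ) →L[ℝ] X)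
    (hS : ∀ (f : C(K, ℝ)) (xs : StrongDual ℝ X),
      xs (S f) = sintegral ((dualMeasure G xs).restrict A) (fun t => f t))
    (hSnorm : ‖S‖ > 1 - modulusOfConvexity X ε) :
    ‖T - S‖ < ε := by
  by_contra! hTS
  set δ := modulusOfConvexity X ε
  have hsmall : ∀ᶠ η in 𝓝 (0 : ℝ), η * (2 + 2 * ε) < ε ∧ (1 - δ) * (1 + 2 * η) < ‖S‖ :=
    (ContinuousAt.eventually_lt (by fun_prop) continuousAt_const (by simpa using hε0)).and
      (ContinuousAt.eventually_lt (by fun_prop) continuousAt_const (by simpa using hSnorm))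
  obtain ⟨η, ⟨hηε, hηS⟩, hη⟩ := (hsmall.filter_mono nhdsWithin_le_nhds).and
    self_mem_nhdsWithin |>.exists (f := 𝓝[>] (0 : ℝ))
  obtain ⟨f, hf, hSf⟩ := S.exists_lt_apply_of_lt_opNorm hηS
  obtain ⟨w, hw, hTSw⟩ := (T - S).exists_lt_apply_of_lt_opNorm (by linarith : ε - η < ‖T - S‖)
  obtain ⟨φ, hφ, hφTS⟩ := exists_norm_apply_mul_sub_apply_le hreg hrep hA hS hη
  have hadd := norm_apply_add_sub_apply_le hT.le hφ hη.le hφTS hf.le hw.le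
  have hsub := norm_apply_add_sub_apply_le hT.le hφ hη.le hφTS hf.le (w := -w)
    (by simpa using hw.le)
  rw [map_neg, ← sub_eq_add_neg] at hsub
  have := norm_le_of_norm_add_le_of_norm_sub_le (ε := ε) (by linarith) hadd hsub (by nlinarith)
  linarith

/-- **Lemma.** Let `X` be uniformly convex, `T : C(K) → X` with `‖T‖ = 1` represented by
a countably additive, regular Borel vector measure `G`, let `0 < ε < 1`, `A` a Borel set,
and let `S` satisfy `x*(S f) = ∫_A f d(x*G)` for all `f` and `x*`. If
`‖S‖ > 1 - δ_X(ε)`, then `‖T - S‖ < ε`. -/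
theorem norm_sub_lt_of_restricted_norm_gt
    {K : Type*} [TopologicalSpace K] [CompactSpace K] [T2Space K]
    [MeasurableSpace K] [BorelSpace K]
    {X : Type*} [NormedAddCommGroup X] [NormedSpace ℝ X] [CompleteSpace X]
    [UniformConvexSpace X]
    (T : C(K, ℝ) →L[ℝ] X) (hT : ‖T‖ = 1)
    (G : VectorMeasure K X) (hreg : IsRegularVM G)
    (hrep : ∀ (f : C(K, ℝ)) (xs : StrongDual ℝ X),
      xs (T f) = sintegral (dualMeasure G xs) (fun t => f t))
    {ε : ℝ} (hε0 : 0 < ε) (hε1 : ε < 1)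
    (A : Set K) (hA : MeasurableSet A)
    (S : C(K, ℝ) →L[ℝ] X)
    (hS : ∀ (f : C(K, ℝ)) (xs : StrongDual ℝ X),
      xs (S f) = sintegral ((dualMeasure G xs).restrict A) (fun t => f t))
    (hSnorm : ‖S‖ > 1 - modulusOfConvexity X ε) :
    ‖T - S‖ < ε :=
  norm_sub_lt_of_restricted_norm_gt_general T hT G hreg hrep hε0 A hA S hS hSnorm
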